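/- arXiv:2103.14144 — 2 statements merged into one kernel-verified Lean document; each statement's English description precedes it below -/
import Mathlib

section
/- Assume the bidder values lie in [0, ā] μ-almost surely, and suppose the revenue curve rev is L-Lipschitz on [0, ∞) and strictly concave on [0, ā]. Let δ > 0 and 0 < α ≤ 1/(L·(1 + δ)/m + 1), and define the expected utilization-based price update E(q) = α·(1 + δ)·rev(q)/m + (1 − α)·q. Then for every starting price q₀ > 0 the iterates q₀, E(q₀), E(E(q₀)), … converge to a point q* satisfying (1 + δ)·rev(q*)/m = q*; moreover the map q ↦ (1 + δ)·rev(q)/m has at most one positive fixed point, so the equilibrium price is unique. -/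
/-!
Write the update as the relaxation `E q = α g q + (1 - α) q` of the scaled revenue
`g = (1 + δ) rev / m`, which is `L (1 + δ) / m`-Lipschitz on `[0, ∞)`. The step-size bound on
`α` makes `E` monotone there. Since `E 0 = 0`, and `E q = (1 - α) q ≤ q` beyond `abar` where the
revenue vanishes, `E` maps every large interval `[0, b]` into itself, so each orbit is monotone
and bounded, and by continuity its limit is a fixed point of `E`, i.e. of `g`.
Uniqueness: strict concavity together with `rev 0 = 0` makes `rev q / q` strictly decreasing on
`(0, abar]`, so `g q = q` has at most one positive solution.
-/

open MeasureTheory Filter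

/-- Number of bidders with value at least `q`. -/
noncomputable def demandCount (n : ℕ) (q : ℝ) (v : Fin n → ℝ) : ℕ :=
  (Finset.univ.filter fun i => q ≤ v i).card

/-- Demand curve with limited supply `m`: expected value of `min(m, N(q,v))`. -/
noncomputable def mde (n m : ℕ) (μ : Measure ℝ) (q : ℝ) : ℝ :=
  ∫ v, ((min m (demandCount n q v) : ℕ) : ℝ) ∂(Measure.pi fun _ : Fin n => μ)

/-- Revenue curve: `rev(q) = q · mde(q)`. -/
noncomputable def rev (n m : ℕ) (μ : Measure ℝ) (q : ℝ) : ℝ :=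
  q * mde n m μ q

open Set Function Topology

section Iterate

variable {X : Type*} {f : X → X} {s : Set X}

lemma monotone_iterate_of_monotoneOn [Preorder X] (hf : MonotoneOn f s) (hs : MapsTo f s s)
    {x : X} (hx : x ∈ s) (hxf : x ≤ f x) : Monotone fun k => f^[k] x := by
  refine monotone_nat_of_le_succ fun k => ?_
  induction k with
  | zero => exact hxf
  | succ k ih =>
    have := hf (hs.iterate k hx) (hs.iterate (k + 1) hx) ih
    rwa [← iterate_succ_apply' f (k + 1), ← iterate_succ_apply' f k] at this

lemma antitone_iterate_of_monotoneOn [Preorder X] (hf : MonotoneOn f s) (hs : MapsTo f s s)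
    {x : X} (hx : x ∈ s) (hfx : f x ≤ x) : Antitone fun k => f^[k] x := by
  refine antitone_nat_of_succ_le fun k => ?_
  induction k with
  | zero => exact hfx
  | succ k ih =>
    have := hf (hs.iterate (k + 1) hx) (hs.iterate k hx) ih
    rwa [← iterate_succ_apply' f (k + 1), ← iterate_succ_apply' f k] at this

lemma isFixedPt_of_tendsto_iterate_of_continuousOn [TopologicalSpace X] [T2Space X]
    (hs : IsClosed s) (hf : ContinuousOn f s) (hfs : MapsTo f s s) {x y : X} (hx : x ∈ s)
    (hy : Tendsto (fun k => f^[k] x) atTop (𝓝 y)) : IsFixedPt f y := by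
  have horbit : ∀ k, f^[k] x ∈ s := fun k => hfs.iterate k hx
  have hys : y ∈ s := hs.mem_of_tendsto hy (Eventually.of_forall horbit)
  refine tendsto_nhds_unique ((tendsto_add_atTop_iff_nat 1).1 ?_) hy
  simp only [iterate_succ' f, comp_apply]
  exact (hf y hys).tendsto.comp (tendsto_nhdsWithin_iff.2 ⟨hy, Eventually.of_forall horbit⟩)

theorem exists_tendsto_iterate_isFixedPt [ConditionallyCompleteLinearOrder X] [TopologicalSpace X]
    [OrderTopology X] {a b : X} (hmono : MonotoneOn f (Icc a b))
    (hcont : ContinuousOn f (Icc a b)) (ha : a ≤ f a) (hb : f b ≤ b) {x : X}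
    (hx : x ∈ Icc a b) :
    ∃ y, IsFixedPt f y ∧ Tendsto (fun k => f^[k] x) atTop (𝓝 y) := by
  have hab : a ≤ b := hx.1.trans hx.2
  have hmaps : MapsTo f (Icc a b) (Icc a b) := fun y hy =>
    ⟨ha.trans (hmono ⟨le_rfl, hab⟩ hy hy.1), (hmono hy ⟨hab, le_rfl⟩ hy.2).trans hb⟩
  have horbit : ∀ k, f^[k] x ∈ Icc a b := fun k => hmaps.iterate k hx
  obtain ⟨y, hy⟩ : ∃ y, Tendsto (fun k => f^[k] x) atTop (𝓝 y) := by
    rcases le_total x (f x) with hxf | hfx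
    · exact ⟨_, tendsto_atTop_ciSup (monotone_iterate_of_monotoneOn hmono hmaps hx hxf)
        ⟨b, forall_mem_range.2 fun k => (horbit k).2⟩⟩
    · exact ⟨_, tendsto_atTop_ciInf (antitone_iterate_of_monotoneOn hmono hmaps hx hfx)
        ⟨a, forall_mem_range.2 fun k => (horbit k).1⟩⟩
  exact ⟨y, isFixedPt_of_tendsto_iterate_of_continuousOn isClosed_Icc hcont hmaps hx hy, hy⟩

end Iterate

section Relaxation

variable {g : ℝ → ℝ} {s : Set ℝ} {K α : ℝ}

lemma monotoneOn_relaxation (hg : ∀ x ∈ s, ∀ y ∈ s, |g x - g y| ≤ K * |x - y|)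
    (hα0 : 0 < α) (hα : α ≤ 1 / (K + 1)) :
    MonotoneOn (fun q => α * g q + (1 - α) * q) s := by
  have hK : 0 < K + 1 := one_div_pos.1 (hα0.trans_le hα)
  have hαK : α * (K + 1) ≤ 1 := (le_div_iff₀ hK).1 (by simpa using hα)
  intro x hx y hy hxy
  have hgxy : g x - g y ≤ K * (y - x) := by
    simpa [abs_sub_comm x y, abs_of_nonneg (sub_nonneg.2 hxy)] using
      (abs_le.1 (hg x hx y hy)).2
  nlinarith [mul_le_mul_of_nonneg_left hgxy hα0.le,
    mul_nonneg (sub_nonneg.2 hαK) (sub_nonneg.2 hxy)]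

lemma continuousOn_relaxation (hg : ∀ x ∈ s, ∀ y ∈ s, |g x - g y| ≤ K * |x - y|) :
    ContinuousOn (fun q => α * g q + (1 - α) * q) s := by
  have : ContinuousOn g s := (LipschitzOnWith.of_dist_le' (K := K) hg).continuousOn
  fun_prop

lemma isFixedPt_relaxation_iff (hα : α ≠ 0) {q : ℝ} :
    IsFixedPt (fun q => α * g q + (1 - α) * q) q ↔ g q = q := by
  simp only [IsFixedPt]
  exact ⟨fun h => mul_left_cancel₀ hα (by linarith), fun h => by rw [h]; ring⟩

end Relaxation

lemma StrictConcaveOn.mul_lt_mul_of_map_zero {g : ℝ → ℝ} {b x y : ℝ}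
    (hg : StrictConcaveOn ℝ (Icc 0 b) g) (hg0 : g 0 = 0) (hx : 0 < x) (hxy : x < y)
    (hyb : y ≤ b) :
    x * g y < y * g x := by
  have hy : 0 < y := hx.trans hxy
  have ht : x / y < 1 := (div_lt_one hy).2 hxy
  have key := hg.2 ⟨le_rfl, hy.le.trans hyb⟩ ⟨hy.le, hyb⟩ hy.ne (sub_pos.2 ht)
    (div_pos hx hy) (sub_add_cancel 1 _)
  simp only [smul_eq_mul, mul_zero, zero_add, hg0, div_mul_cancel₀ x hy.ne'] at key
  calc x * g y = y * (x / y * g y) := by field_simp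
    _ < y * g x := mul_lt_mul_of_pos_left key hy

lemma StrictConcaveOn.eq_of_const_mul_eq_self {g : ℝ → ℝ} {b c x y : ℝ}
    (hg : StrictConcaveOn ℝ (Icc 0 b) g) (hg0 : g 0 = 0) (hgb : ∀ q, b < q → g q = 0)
    (hx : 0 < x) (hy : 0 < y) (hfx : c * g x = x) (hfy : c * g y = y) : x = y := by
  have hle : ∀ q, 0 < q → c * g q = q → q ≤ b := fun q hq hfq =>
    not_lt.1 fun hbq => hq.ne' (by rw [← hfq, hgb q hbq, mul_zero])
  have hlt : ∀ x y, 0 < x → c * g x = x → c * g y = y → x < y → y ≤ b → False :=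
    fun x y hx hfx hfy hxy hyb => by
      have key := hg.mul_lt_mul_of_map_zero hg0 hx hxy hyb
      have hc : c = 0 := by
        have : c * (y * g x - x * g y) = 0 := by linear_combination y * hfx - x * hfy
        exact (mul_eq_zero.1 this).resolve_right (sub_pos.2 key).ne'
      exact hx.ne' (by rw [← hfx, hc, zero_mul])
  rcases lt_trichotomy x y with hxy | hxy | hxy
  · exact (hlt x y hx hfx hfy hxy (hle y hy hfy)).elim
  · exact hxy
  · exact (hlt y x hy hfy hfx hxy (hle x hx hfx)).elim

lemma rev_zero (n m : ℕ) (μ : Measure ℝ) : rev n m μ 0 = 0 :=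
  zero_mul _

lemma demandCount_eq_zero {n : ℕ} {q : ℝ} {v : Fin n → ℝ} (hv : ∀ i, v i < q) :
    demandCount n q v = 0 := by
  simpa [demandCount, Finset.filter_eq_empty_iff] using hv

lemma rev_eq_zero_of_lt (n m : ℕ) {μ : Measure ℝ} [SigmaFinite μ] {abar q : ℝ}
    (hbdd : ∀ᵐ x ∂μ, x ≤ abar) (hq : abar < q) : rev n m μ q = 0 := by
  have hv : ∀ᵐ v ∂(Measure.pi fun _ : Fin n => μ), ∀ i, v i < q :=
    ae_all_iff.2 fun i => (Measure.quasiMeasurePreserving_eval (fun _ => μ) i).ae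
      (hbdd.mono fun x hx => hx.trans_lt hq)
  rw [rev, mde, integral_eq_zero_of_ae (hv.mono fun v hv => by simp [demandCount_eq_zero hv]),
    mul_zero]

theorem udpp_stable_general
    (n m : ℕ) (μ : Measure ℝ) [IsProbabilityMeasure μ]
    (abar : ℝ)
    (hbdd : ∀ᵐ x ∂μ, x ∈ Set.Icc 0 abar)
    (L : ℝ)
    (hlip : ∀ x ∈ Set.Ici (0 : ℝ), ∀ y ∈ Set.Ici (0 : ℝ),
      |rev n m μ x - rev n m μ y| ≤ L * |x - y|)
    (hconc : StrictConcaveOn ℝ (Set.Icc 0 abar) (rev n m μ))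
    (δ : ℝ) (hδ : 0 < δ)
    (α : ℝ) (hα0 : 0 < α) (hα1 : α ≤ 1 / (L * (1 + δ) / m + 1))
    (E : ℝ → ℝ)
    (hE : ∀ q, E q = α * ((1 + δ) * rev n m μ q / m) + (1 - α) * q) :
    (∀ q₀, 0 < q₀ → ∃ qs, (1 + δ) * rev n m μ qs / m = qs ∧
        Tendsto (fun k => E^[k] q₀) atTop (nhds qs)) ∧
    (∀ x y : ℝ, 0 < x → 0 < y →
      (1 + δ) * rev n m μ x / m = x → (1 + δ) * rev n m μ y / m = y → x = y) := by
  set c : ℝ := (1 + δ) / m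
  have hc : 0 ≤ c := by positivity
  have hg : ∀ q, (1 + δ) * rev n m μ q / m = c * rev n m μ q := fun q => mul_div_right_comm ..
  have hvanish : ∀ q, abar < q → rev n m μ q = 0 := fun q =>
    rev_eq_zero_of_lt n m (hbdd.mono fun _ hx => hx.2)
  have hglip : ∀ x ∈ Ici (0 : ℝ), ∀ y ∈ Ici (0 : ℝ),
      |c * rev n m μ x - c * rev n m μ y| ≤ L * (1 + δ) / m * |x - y| := fun x hx y hy => by
    calc |c * rev n m μ x - c * rev n m μ y| = c * |rev n m μ x - rev n m μ y| := by
          rw [← mul_sub, abs_mul, abs_of_nonneg hc]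
      _ ≤ c * (L * |x - y|) := mul_le_mul_of_nonneg_left (hlip x hx y hy) hc
      _ = L * (1 + δ) / m * |x - y| := by ring
  obtain rfl : E = fun q => α * (c * rev n m μ q) + (1 - α) * q := funext fun q => by rw [hE, hg]
  simp only [hg]
  refine ⟨fun q₀ hq₀ => ?_,
    fun x y hx hy => hconc.eq_of_const_mul_eq_self (rev_zero n m μ) hvanish hx hy⟩
  set b := max q₀ (abar + 1)
  have hb : 0 < b := hq₀.trans_le (le_max_left _ _)
  obtain ⟨qs, hfix, hlim⟩ := exists_tendsto_iterate_isFixedPt (a := 0) (b := b)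
    ((monotoneOn_relaxation hglip hα0 hα1).mono Icc_subset_Ici_self)
    ((continuousOn_relaxation hglip).mono Icc_subset_Ici_self)
    (by simp [rev_zero])
    (by simp only [hvanish b (lt_max_of_lt_right (lt_add_one abar)), mul_zero, zero_add]; nlinarith)
    ⟨hq₀.le, le_max_left _ _⟩
  exact ⟨qs, (isFixedPt_relaxation_iff hα0.ne').1 hfix, hlim⟩

/-- Theorem (UDPP stability): if bidder values are bounded by `abar`, the revenue
curve is `L`-Lipschitz on `[0,∞)` and strictly concave on `[0, abar]`, and
`0 < α ≤ 1/(L(1+δ)/m + 1)`, then the UDPP expected price update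
`E(q) = α·(1+δ)·rev(q)/m + (1-α)·q` converges from every positive starting price to
an equilibrium price, and the equilibrium price is unique. -/
theorem udpp_stable
    (n m : ℕ) (hm : 1 ≤ m) (μ : Measure ℝ) [IsProbabilityMeasure μ]
    (abar : ℝ) (habar : 0 < abar)
    (hbdd : ∀ᵐ x ∂μ, x ∈ Set.Icc 0 abar)
    (L : ℝ) (hL : 0 ≤ L)
    (hlip : ∀ x ∈ Set.Ici (0 : ℝ), ∀ y ∈ Set.Ici (0 : ℝ),
      |rev n m μ x - rev n m μ y| ≤ L * |x - y|)
    (hconc : StrictConcaveOn ℝ (Set.Icc 0 abar) (rev n m μ))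
    (δ : ℝ) (hδ : 0 < δ)
    (α : ℝ) (hα0 : 0 < α) (hα1 : α ≤ 1 / (L * (1 + δ) / m + 1))
    (E : ℝ → ℝ)
    (hE : ∀ q, E q = α * ((1 + δ) * rev n m μ q / m) + (1 - α) * q) :
    (∀ q₀, 0 < q₀ → ∃ qs, (1 + δ) * rev n m μ qs / m = qs ∧
        Tendsto (fun k => E^[k] q₀) atTop (nhds qs)) ∧
    (∀ x y : ℝ, 0 < x → 0 < y →
      (1 + δ) * rev n m μ x / m = x → (1 + δ) * rev n m μ y / m = y → x = y) :=
  udpp_stable_general n m μ abar hbdd L hlip hconc δ hδ α hα0 hα1 E hE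
end

section
/- Assume the bidder values are μ-almost surely nonnegative and integrable. If the revenue curve rev is L-Lipschitz on [0, ∞), then the welfare curve W is Lipschitz continuous on [0, ∞). -/
open MeasureTheory Filter

/-- Welfare of the maximum-value allocation at price `q` for value profile `v`:
the largest sum `Σ_{i∈S} vᵢ·1{vᵢ ≥ q}` over subsets `S` of size at most `m`. -/
noncomputable def maxWelfare (n m : ℕ) (q : ℝ) (v : Fin n → ℝ) : ℝ :=
  ((Finset.univ : Finset (Fin n)).powerset.filter fun S => S.card ≤ m).sup'
    ⟨∅, by simp⟩ fun S => ∑ i ∈ S, if q ≤ v i then v i else 0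

/-- Welfare curve: expected welfare of the maximum-value allocation at price `q`. -/
noncomputable def W (n m : ℕ) (μ : Measure ℝ) (q : ℝ) : ℝ :=
  ∫ v, maxWelfare n m q v ∂(Measure.pi fun _ : Fin n => μ)
/-! For `x ≤ y`, split an optimal allocation at price `x` into the bidders with value at
least `y` and the others. The former can be padded, with bidders worth at least `y` each, to a
feasible allocation at price `y` of size `min(m, N(y))`; the latter are worth less than `y` each.
Hence `W(x) - W(y) ≤ y (mde x - mde y) = (y - x) mde x + rev x - rev y ≤ (m + L) (y - x)`,
which suffices because `W` is nonincreasing. -/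

open Finset

section Allocation

variable {n m : ℕ} {q : ℝ} {v : Fin n → ℝ}

noncomputable def activeBidders (q : ℝ) (v : Fin n → ℝ) : Finset (Fin n) :=
  univ.filter fun i => q ≤ v i

lemma mem_activeBidders {i : Fin n} : i ∈ activeBidders q v ↔ q ≤ v i := by
  simp [activeBidders]

noncomputable def unitsSold (n m : ℕ) (q : ℝ) (v : Fin n → ℝ) : ℕ :=
  min m (demandCount n q v)

lemma unitsSold_le : unitsSold n m q v ≤ m :=
  min_le_left _ _

lemma unitsSold_le_card : unitsSold n m q v ≤ #(activeBidders q v) :=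
  min_le_right _ _

lemma card_le_unitsSold {S : Finset (Fin n)} (hS : S ⊆ activeBidders q v) (hSm : #S ≤ m) :
    #S ≤ unitsSold n m q v :=
  le_min hSm (card_le_card hS)

lemma activeBidders_subset_of_le {x y : ℝ} (hxy : x ≤ y) (v : Fin n → ℝ) :
    activeBidders y v ⊆ activeBidders x v :=
  fun _ hi => mem_activeBidders.2 (hxy.trans (mem_activeBidders.1 hi))

lemma filter_subset_activeBidders (S : Finset (Fin n)) :
    S.filter (fun i => q ≤ v i) ⊆ activeBidders q v :=
  filter_subset_filter _ (subset_univ S)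

lemma sum_le_maxWelfare {S : Finset (Fin n)} (hS : S ⊆ activeBidders q v) (hSm : #S ≤ m) :
    ∑ i ∈ S, v i ≤ maxWelfare n m q v := by
  refine le_trans (le_of_eq ?_) (le_sup' _ (mem_filter.2 ⟨mem_powerset.2 (subset_univ S), hSm⟩))
  exact sum_congr rfl fun i hi => (if_pos (mem_activeBidders.1 (hS hi))).symm

lemma maxWelfare_le {c : ℝ}
    (h : ∀ S ⊆ activeBidders q v, #S ≤ m → ∑ i ∈ S, v i ≤ c) : maxWelfare n m q v ≤ c := by
  refine sup'_le _ _ fun S hS => ?_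
  rw [← sum_filter]
  exact h _ (filter_subset_activeBidders S) ((card_filter_le _ _).trans (mem_filter.1 hS).2)

lemma maxWelfare_nonneg : 0 ≤ maxWelfare n m q v := by
  simpa using sum_le_maxWelfare (m := m) (empty_subset (activeBidders q v)) (Nat.zero_le m)

lemma maxWelfare_le_sum_abs : maxWelfare n m q v ≤ ∑ i, |v i| :=
  maxWelfare_le fun S _ _ => (sum_le_sum fun i _ => le_abs_self (v i)).trans
    (sum_le_sum_of_subset_of_nonneg (subset_univ S) fun _ _ _ => abs_nonneg _)

lemma maxWelfare_antitone (v : Fin n → ℝ) : Antitone fun q => maxWelfare n m q v :=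
  fun _ _ hxy => maxWelfare_le fun _ hS hSm =>
    sum_le_maxWelfare (hS.trans (activeBidders_subset_of_le hxy v)) hSm

lemma sum_add_mul_le_maxWelfare (hq : 0 ≤ q) {S : Finset (Fin n)}
    (hS : S ⊆ activeBidders q v) (hSm : #S ≤ m) :
    ∑ i ∈ S, v i + q * ((unitsSold n m q v : ℝ) - #S) ≤ maxWelfare n m q v := by
  set k := unitsSold n m q v
  obtain ⟨T, hST, hT, hTcard⟩ := exists_subsuperset_card_eq hS (le_max_left #S k)
    (max_le (card_le_card hS) unitsSold_le_card)
  have hpad : q * ((#T : ℝ) - #S) ≤ ∑ i ∈ T \ S, v i := by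
    rw [← cast_card_sdiff hST, mul_comm, ← nsmul_eq_mul]
    exact card_nsmul_le_sum _ _ _ fun i hi => mem_activeBidders.1 (hT (mem_sdiff.1 hi).1)
  have hkT : (k : ℝ) ≤ #T := by exact_mod_cast hTcard ▸ le_max_right #S k
  calc ∑ i ∈ S, v i + q * ((k : ℝ) - #S) ≤ ∑ i ∈ S, v i + q * ((#T : ℝ) - #S) := by gcongr
    _ ≤ ∑ i ∈ S, v i + ∑ i ∈ T \ S, v i := by gcongr
    _ = ∑ i ∈ T, v i := by rw [add_comm, sum_sdiff hST]
    _ ≤ maxWelfare n m q v := sum_le_maxWelfare hT (hTcard ▸ max_le hSm unitsSold_le)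

lemma maxWelfare_le_add_mul {x y : ℝ} (hy : 0 ≤ y) (v : Fin n → ℝ) :
    maxWelfare n m x v ≤ maxWelfare n m y v +
      y * ((unitsSold n m x v : ℝ) - (unitsSold n m y v : ℝ)) := by
  refine maxWelfare_le fun S hS hSm => ?_
  set S₁ := S.filter fun i => y ≤ v i
  set S₂ := S.filter fun i => ¬ y ≤ v i
  have hhigh := sum_add_mul_le_maxWelfare hy (filter_subset_activeBidders (v := v) S)
    ((card_filter_le S _).trans hSm)
  have hlow : ∑ i ∈ S₂, v i ≤ #S₂ * y := by
    rw [← nsmul_eq_mul]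
    exact sum_le_card_nsmul _ _ _ fun i hi => (not_le.1 (mem_filter.1 hi).2).le
  have hcard : (#S₁ : ℝ) + #S₂ = #S := by
    exact_mod_cast card_filter_add_card_filter_not _
  have hSx : (#S : ℝ) ≤ unitsSold n m x v := by
    exact_mod_cast card_le_unitsSold hS hSm
  calc ∑ i ∈ S, v i = ∑ i ∈ S₁, v i + ∑ i ∈ S₂, v i := (sum_filter_add_sum_filter_not _ _ _).symm
    _ ≤ maxWelfare n m y v - y * ((unitsSold n m y v : ℝ) - #S₁) + #S₂ * y := by
        gcongr; linarith
    _ = maxWelfare n m y v + y * ((#S : ℝ) - unitsSold n m y v) := by rw [← hcard]; ring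
    _ ≤ maxWelfare n m y v + y * ((unitsSold n m x v : ℝ) - unitsSold n m y v) := by gcongr

end Allocation

section Expectation

variable {n m : ℕ} {μ : Measure ℝ}

lemma mde_eq_integral_unitsSold (q : ℝ) :
    mde n m μ q = ∫ v, (unitsSold n m q v : ℝ) ∂(Measure.pi fun _ : Fin n => μ) :=
  rfl

lemma measurable_maxWelfare (q : ℝ) : Measurable (maxWelfare n m q) := by
  have h : maxWelfare n m q =
      ((univ : Finset (Fin n)).powerset.filter fun S => S.card ≤ m).sup' ⟨∅, by simp⟩
        fun S (v : Fin n → ℝ) => ∑ i ∈ S, if q ≤ v i then v i else 0 :=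
    funext fun v => (Finset.sup'_apply (C := fun _ : Fin n → ℝ => ℝ) _
      (fun S (v : Fin n → ℝ) => ∑ i ∈ S, if q ≤ v i then v i else 0) v).symm
  rw [h]
  exact measurable_sup' _ fun S _ => measurable_sum S fun i _ => (measurable_pi_apply i).ite
    (measurableSet_le measurable_const (measurable_pi_apply i)) measurable_const

lemma measurable_unitsSold (q : ℝ) :
    Measurable fun v : Fin n → ℝ => (unitsSold n m q v : ℝ) := by
  have : Measurable fun v : Fin n → ℝ => demandCount n q v := by
    simp_rw [demandCount, card_filter]
    exact measurable_sum _ fun i _ =>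
      measurable_const.ite (measurableSet_le measurable_const (measurable_pi_apply i))
        measurable_const
  exact measurable_from_top.comp (measurable_const.min this : Measurable (unitsSold n m q))

variable [IsFiniteMeasure μ]

lemma integrable_unitsSold (q : ℝ) :
    Integrable (fun v : Fin n → ℝ => (unitsSold n m q v : ℝ))
      (Measure.pi fun _ : Fin n => μ) := by
  refine .of_bound (measurable_unitsSold q).aestronglyMeasurable m
    (ae_of_all _ fun v => ?_)
  rw [Real.norm_natCast]
  exact_mod_cast unitsSold_le

lemma integrable_maxWelfare (hint : Integrable (id : ℝ → ℝ) μ) (q : ℝ) :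
    Integrable (maxWelfare n m q) (Measure.pi fun _ : Fin n => μ) := by
  have hsum : Integrable (fun v : Fin n → ℝ => ∑ i, |v i|) (Measure.pi fun _ : Fin n => μ) :=
    integrable_finsetSum univ fun i _ => (integrable_eval (i := i) hint).abs
  refine hsum.mono (measurable_maxWelfare q).aestronglyMeasurable (ae_of_all _ fun v => ?_)
  rw [Real.norm_of_nonneg maxWelfare_nonneg,
    Real.norm_of_nonneg (sum_nonneg fun i _ => abs_nonneg (v i))]
  exact maxWelfare_le_sum_abs

lemma W_antitone (hint : Integrable (id : ℝ → ℝ) μ) : Antitone (W n m μ) :=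
  fun x y hxy => integral_mono (integrable_maxWelfare hint y) (integrable_maxWelfare hint x)
    fun v => maxWelfare_antitone v hxy

lemma W_le_add_mul_sub_mde (hint : Integrable (id : ℝ → ℝ) μ) {x y : ℝ} (hy : 0 ≤ y) :
    W n m μ x ≤ W n m μ y + y * (mde n m μ x - mde n m μ y) := by
  have hgap : Integrable (fun v => y * ((unitsSold n m x v : ℝ) - unitsSold n m y v))
      (Measure.pi fun _ : Fin n => μ) :=
    ((integrable_unitsSold x).sub (integrable_unitsSold y)).const_mul y
  calc W n m μ x
      ≤ ∫ v, maxWelfare n m y v + y * ((unitsSold n m x v : ℝ) -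
          (unitsSold n m y v : ℝ)) ∂(Measure.pi fun _ : Fin n => μ) :=
        integral_mono (integrable_maxWelfare hint x) ((integrable_maxWelfare hint y).add hgap)
          fun v => maxWelfare_le_add_mul hy v
    _ = W n m μ y + y * (mde n m μ x - mde n m μ y) := by
        rw [mde_eq_integral_unitsSold, mde_eq_integral_unitsSold,
          integral_add (integrable_maxWelfare hint y) hgap, integral_const_mul,
          integral_sub (integrable_unitsSold x) (integrable_unitsSold y)]
        rfl

end Expectation

lemma mde_le {n m : ℕ} {μ : Measure ℝ} [IsProbabilityMeasure μ] (q : ℝ) : mde n m μ q ≤ m := by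
  rw [mde_eq_integral_unitsSold]
  calc ∫ v, (unitsSold n m q v : ℝ) ∂(Measure.pi fun _ : Fin n => μ)
      ≤ ∫ _, (m : ℝ) ∂(Measure.pi fun _ : Fin n => μ) :=
        integral_mono (integrable_unitsSold q) (integrable_const _)
          fun v => Nat.cast_le.mpr unitsSold_le
    _ = m := by simp

lemma AntitoneOn.abs_sub_le_mul {f : ℝ → ℝ} {s : Set ℝ} {K : ℝ} (hf : AntitoneOn f s)
    (h : ∀ x ∈ s, ∀ y ∈ s, x ≤ y → f x - f y ≤ K * (y - x)) :
    ∀ x ∈ s, ∀ y ∈ s, |f x - f y| ≤ K * |x - y| := by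
  intro x hx y hy
  rcases le_total x y with hxy | hyx
  · rw [abs_of_nonneg (sub_nonneg.2 (hf hx hy hxy)), abs_sub_comm, abs_of_nonneg (sub_nonneg.2 hxy)]
    exact h x hx y hy hxy
  · rw [abs_sub_comm, abs_of_nonneg (sub_nonneg.2 (hf hy hx hyx)), abs_of_nonneg (sub_nonneg.2 hyx)]
    exact h y hy x hx hyx

theorem welfare_curve_lipschitz_general
    (n m : ℕ) (μ : Measure ℝ) [IsProbabilityMeasure μ]
    (hint : Integrable (id : ℝ → ℝ) μ)
    (L : ℝ) (hL : 0 ≤ L)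
    (hlip : ∀ x ∈ Set.Ici (0 : ℝ), ∀ y ∈ Set.Ici (0 : ℝ),
      |rev n m μ x - rev n m μ y| ≤ L * |x - y|) :
    ∃ K : ℝ, 0 ≤ K ∧ ∀ x ∈ Set.Ici (0 : ℝ), ∀ y ∈ Set.Ici (0 : ℝ),
      |W n m μ x - W n m μ y| ≤ K * |x - y| := by
  refine ⟨L + m, by positivity,
    ((W_antitone hint).antitoneOn _).abs_sub_le_mul fun x hx y hy hxy => ?_⟩
  have hrev : rev n m μ x - rev n m μ y ≤ L * (y - x) := by
    have h := hlip x hx y hy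
    rw [abs_sub_comm x y, abs_of_nonneg (sub_nonneg.2 hxy)] at h
    exact (le_abs_self _).trans h
  calc W n m μ x - W n m μ y ≤ y * (mde n m μ x - mde n m μ y) :=
        sub_le_iff_le_add'.2 (W_le_add_mul_sub_mde hint hy)
    _ = (y - x) * mde n m μ x + (rev n m μ x - rev n m μ y) := by rw [rev, rev]; ring
    _ ≤ (y - x) * m + L * (y - x) := by gcongr; exact mde_le x
    _ = (L + m) * (y - x) := by ring

/-- If the revenue curve is `L`-Lipschitz on `[0, ∞)`, then the welfare curve is
Lipschitz continuous on `[0, ∞)`. -/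
theorem welfare_curve_lipschitz
    (n m : ℕ) (hm : 1 ≤ m) (μ : Measure ℝ) [IsProbabilityMeasure μ]
    (hpos : ∀ᵐ x ∂μ, 0 ≤ x) (hint : Integrable (id : ℝ → ℝ) μ)
    (L : ℝ) (hL : 0 ≤ L)
    (hlip : ∀ x ∈ Set.Ici (0 : ℝ), ∀ y ∈ Set.Ici (0 : ℝ),
      |rev n m μ x - rev n m μ y| ≤ L * |x - y|) :
    ∃ K : ℝ, 0 ≤ K ∧ ∀ x ∈ Set.Ici (0 : ℝ), ∀ y ∈ Set.Ici (0 : ℝ),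
      |W n m μ x - W n m μ y| ≤ K * |x - y| :=
  welfare_curve_lipschitz_general n m μ hint L hL hlip
end
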